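/- For every N ∈ ℕ and every continuous function φ : [0,1]^N → ℂ, ∫_{𝒜} φ(sin y_1, …, sin y_N) · J_{Sp(N)}(y_1,…,y_N) dy = ∫_{Δ_N} φ(ξ_1,…,ξ_N) · (∏_{j=1}^N 2ξ_j) · ∏_{j>k} (ξ_j²(1−ξ_k²) − (1−ξ_j²)ξ_k²) dξ, where Δ_N = {ξ ∈ ℝ^N : 0 ≤ ξ_1 ≤ ξ_2 ≤ ⋯ ≤ ξ_N ≤ 1} and both integrals are with respect to Lebesgue measure. -/

import Mathlib

/-!
The substitution `ξ_j = sin y_j` in the integral of a continuous function against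
the Jacobian `J_{Sp(N)}`.
-/

open Real

noncomputable section

/-- The simplex `𝒜 = {y ∈ ℝ^N : 0 ≤ y_1 ≤ y_2 ≤ ⋯ ≤ y_N ≤ π/2}`. -/
def ASet (N : ℕ) : Set (Fin N → ℝ) :=
  {y | (∀ i, 0 ≤ y i ∧ y i ≤ π / 2) ∧ Monotone y}

/-- The simplex `Δ_N = {ξ ∈ ℝ^N : 0 ≤ ξ_1 ≤ ξ_2 ≤ ⋯ ≤ ξ_N ≤ 1}`. -/
def DeltaSet (N : ℕ) : Set (Fin N → ℝ) :=
  {ξ | (∀ i, 0 ≤ ξ i ∧ ξ i ≤ 1) ∧ Monotone ξ}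

/-- The Jacobian
`J_{Sp(N)}(y) = ∏_j sin(2 y_j) · ∏_{j>k} sin(y_j − y_k) sin(y_j + y_k)`. -/
def JSp (N : ℕ) (y : Fin N → ℝ) : ℝ :=
  (∏ j, Real.sin (2 * y j)) *
    ∏ j, ∏ k ∈ Finset.univ.filter (fun k => k < j),
      Real.sin (y j - y k) * Real.sin (y j + y k)

/-- The transformed weight
`(∏_j 2ξ_j) · ∏_{j>k} (ξ_j²(1−ξ_k²) − (1−ξ_j²)ξ_k²)`. -/
def JSpXi (N : ℕ) (ξ : Fin N → ℝ) : ℝ :=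
  (∏ j, 2 * ξ j) *
    ∏ j, ∏ k ∈ Finset.univ.filter (fun k => k < j),
      ((ξ j) ^ 2 * (1 - (ξ k) ^ 2) - (1 - (ξ j) ^ 2) * (ξ k) ^ 2)

/-!
The map `y ↦ (sin y_j)_j` is injective on `𝒜`, sends it onto `Δ_N`, and has diagonal
derivative with determinant `∏_j cos y_j ≥ 0`. Since `sin 2a = 2 sin a cos a` and
`sin (a - b) sin (a + b) = sin² a - sin² b`, the Jacobian factors as
`JSp N y = (∏_j cos y_j) · JSpXi N (sin y)`, and the identity is the change of variables
formula for this map.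
-/

open MeasureTheory Set

theorem Real.sin_sub_mul_sin_add (a b : ℝ) :
    sin (a - b) * sin (a + b) = sin a ^ 2 * (1 - sin b ^ 2) - (1 - sin a ^ 2) * sin b ^ 2 := by
  rw [sin_sub, sin_add]
  linear_combination sin a ^ 2 * sin_sq_add_cos_sq b - sin b ^ 2 * sin_sq_add_cos_sq a

section CoordinatewiseMap

variable {ι : Type*} [Fintype ι] {f f' : ℝ → ℝ}

theorem hasFDerivAt_pi_map (hf : ∀ x, HasDerivAt f (f' x) x) (y : ι → ℝ) :
    HasFDerivAt (fun y i => f (y i))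
      (ContinuousLinearMap.pi fun i => (ContinuousLinearMap.toSpanSingleton ℝ (f' (y i))).comp
        (ContinuousLinearMap.proj i)) y :=
  hasFDerivAt_pi.2 fun i => (hf (y i)).hasFDerivAt.comp y (hasFDerivAt_apply i y)

theorem integral_image_pi_map_eq_integral_abs_prod_smul {F : Type*} [NormedAddCommGroup F]
    [NormedSpace ℝ F] {s : Set (ι → ℝ)} (hs : MeasurableSet s) (hf : ∀ x, HasDerivAt f (f' x) x)
    (hinj : InjOn (fun y i => f (y i)) s) (g : (ι → ℝ) → F) :
    ∫ x in (fun y i => f (y i)) '' s, g x = ∫ y in s, |∏ i, f' (y i)| • g (fun i => f (y i)) := by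
  rw [integral_image_eq_integral_abs_det_fderiv_smul volume hs
    (fun y _ => (hasFDerivAt_pi_map hf y).hasFDerivWithinAt) hinj]
  simp only [ContinuousLinearMap.det_pi, ContinuousLinearMap.det_toSpanSingleton]

end CoordinatewiseMap

theorem JSp_eq_prod_cos_mul_JSpXi (N : ℕ) (y : Fin N → ℝ) :
    JSp N y = (∏ i, cos (y i)) * JSpXi N (fun i => sin (y i)) := by
  simp only [JSp, JSpXi, sin_two_mul, sin_sub_mul_sin_add, Finset.prod_mul_distrib]
  ring

theorem isClosed_ASet (N : ℕ) : IsClosed (ASet N) := by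
  simp only [ASet, ofPred_and, ofPred_forall]
  exact (isClosed_iInter fun i => (isClosed_le continuous_const (continuous_apply i)).inter
    (isClosed_le (continuous_apply i) continuous_const)).inter isClosed_monotone

theorem mem_Icc_of_mem_ASet {N : ℕ} {y : Fin N → ℝ} (hy : y ∈ ASet N) (i : Fin N) :
    y i ∈ Icc (-(π / 2)) (π / 2) :=
  ⟨by linarith [(hy.1 i).1, pi_pos], (hy.1 i).2⟩

theorem image_sin_ASet (N : ℕ) : (fun y i => sin (y i)) '' ASet N = DeltaSet N := by
  ext ξ
  constructor
  · rintro ⟨y, hy, rfl⟩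
    refine ⟨fun i => ⟨sin_nonneg_of_nonneg_of_le_pi (hy.1 i).1 (by linarith [(hy.1 i).2, pi_pos]),
      sin_le_one _⟩, fun i j hij => ?_⟩
    exact strictMonoOn_sin.monotoneOn (mem_Icc_of_mem_ASet hy i) (mem_Icc_of_mem_ASet hy j)
      (hy.2 hij)
  · rintro ⟨hξ, hmono⟩
    refine ⟨fun i => arcsin (ξ i), ⟨fun i => ⟨arcsin_nonneg.2 (hξ i).1, arcsin_le_pi_div_two _⟩,
      fun i j hij => monotone_arcsin (hmono hij)⟩, funext fun i => ?_⟩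
    exact sin_arcsin (by linarith [(hξ i).1]) (hξ i).2

theorem injOn_sin_ASet (N : ℕ) : InjOn (fun y i => sin (y i)) (ASet N) := fun _ ha _ hb hab =>
  funext fun i => injOn_sin (mem_Icc_of_mem_ASet ha i) (mem_Icc_of_mem_ASet hb i) (congrFun hab i)

theorem Sp_jacobian_substitution_general (N : ℕ) (φ : (Fin N → ℝ) → ℂ) :
    ∫ y in ASet N, φ (fun i => Real.sin (y i)) * (JSp N y : ℂ) =
      ∫ ξ in DeltaSet N, φ ξ * (JSpXi N ξ : ℂ) := by
  have hA : MeasurableSet (ASet N) := (isClosed_ASet N).measurableSet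
  rw [← image_sin_ASet,
    integral_image_pi_map_eq_integral_abs_prod_smul hA hasDerivAt_sin (injOn_sin_ASet N)]
  refine setIntegral_congr_fun hA fun y hy => ?_
  have hcos : 0 ≤ ∏ i, cos (y i) :=
    Finset.prod_nonneg fun i _ => cos_nonneg_of_mem_Icc (mem_Icc_of_mem_ASet hy i)
  rw [abs_of_nonneg hcos, JSp_eq_prod_cos_mul_JSpXi, Complex.real_smul]
  push_cast
  ring

/-- **Substituting `ξ_j = sin y_j`**: for every continuous `φ : [0,1]^N → ℂ`,
`∫_𝒜 φ(sin y) J_{Sp(N)}(y) dy = ∫_{Δ_N} φ(ξ) (∏_j 2ξ_j) ∏_{j>k}(ξ_j²(1−ξ_k²) − (1−ξ_j²)ξ_k²) dξ`. -/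
theorem Sp_jacobian_substitution (N : ℕ) (φ : (Fin N → ℝ) → ℂ)
    (hφ : ContinuousOn φ (Set.univ.pi fun _ : Fin N => Set.Icc (0 : ℝ) 1)) :
    ∫ y in ASet N, φ (fun i => Real.sin (y i)) * (JSp N y : ℂ) =
      ∫ ξ in DeltaSet N, φ ξ * (JSpXi N ξ : ℂ) :=
  Sp_jacobian_substitution_general N φ
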